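/- (Inductive trapping estimate). In the setting of hypothesis (A), let γ(ω)>0 satisfy γ(ω)≤δ_0(ω) and L_t(ω)···L_1(ω)γ(ω)≤δ_t(ω) for all t≥1. Then for every a∈X(ω) with ρ(a,x̄(ω))≤γ(ω) and every t≥0: x_t^a(ω)∈X_t(ω), ρ(x_t^a(ω),x̄_t(ω))≤δ_t(ω), and ρ(x_t^a(ω),x̄_t(ω)) ≤ L_t(ω)···L_0(ω)γ(ω) (with L_0:=1). -/

import Mathlib

open MeasureTheory Filter

noncomputable def rdsPath {X Ω : Type*} (f : X → Ω → X) (T : Ω → Ω) (a : X) (ω : Ω) : ℕ → X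
  | 0 => a
  | t + 1 => f (rdsPath f T a ω t) (T^[t] ω)

section RdsPath

variable {Ω X : Type*} {T : Ω → Ω} {f : X → Ω → X} {a : X} {ω : Ω}

theorem rdsPath_succ (t : ℕ) : rdsPath f T a ω (t + 1) = f (rdsPath f T a ω t) (T^[t] ω) := rfl

theorem rdsPath_mem {Xset : Ω → Set X} (hinv : ∀ ω, ∀ x ∈ Xset ω, f x ω ∈ Xset (T ω))
    (ha : a ∈ Xset ω) (t : ℕ) : rdsPath f T a ω t ∈ Xset (T^[t] ω) := by
  induction t with
  | zero => exact ha
  | succ t ih =>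
    rw [rdsPath_succ, Function.iterate_succ_apply']
    exact hinv _ _ ih

variable [MetricSpace X] {xbar : Ω → X} {Xset : Ω → Set X} {L δ : Ω → ℝ}

theorem dist_rdsPath_succ_le (hfix : ∀ ω, xbar (T ω) = f (xbar ω) ω)
    (hLip : ∀ ω, ∀ x ∈ Xset ω, dist x (xbar ω) ≤ δ ω →
      dist (f x ω) (f (xbar ω) ω) ≤ L ω * dist x (xbar ω))
    {t : ℕ} (hmem : rdsPath f T a ω t ∈ Xset (T^[t] ω))
    (hδ : dist (rdsPath f T a ω t) (xbar (T^[t] ω)) ≤ δ (T^[t] ω)) :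
    dist (rdsPath f T a ω (t + 1)) (xbar (T^[t + 1] ω)) ≤
      L (T^[t] ω) * dist (rdsPath f T a ω t) (xbar (T^[t] ω)) := by
  rw [rdsPath_succ, Function.iterate_succ_apply', hfix]
  exact hLip _ _ hmem hδ

/-- As long as the product bound stays below `δ`, the local Lipschitz estimate applies at
every step, so the bounds propagate along the whole path. -/
theorem dist_rdsPath_le_prod_mul {γ : ℝ} (hL : ∀ ω, 0 ≤ L ω)
    (hfix : ∀ ω, xbar (T ω) = f (xbar ω) ω)
    (hinv : ∀ ω, ∀ x ∈ Xset ω, f x ω ∈ Xset (T ω))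
    (hLip : ∀ ω, ∀ x ∈ Xset ω, dist x (xbar ω) ≤ δ ω →
      dist (f x ω) (f (xbar ω) ω) ≤ L ω * dist x (xbar ω))
    (hγ : ∀ t : ℕ, (∏ i ∈ Finset.range t, L (T^[i] ω)) * γ ≤ δ (T^[t] ω))
    (ha : a ∈ Xset ω) (hd : dist a (xbar ω) ≤ γ) (t : ℕ) :
    dist (rdsPath f T a ω t) (xbar (T^[t] ω)) ≤ (∏ i ∈ Finset.range t, L (T^[i] ω)) * γ := by
  induction t with
  | zero => simpa [rdsPath] using hd
  | succ t ih =>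
    calc dist (rdsPath f T a ω (t + 1)) (xbar (T^[t + 1] ω))
        ≤ L (T^[t] ω) * dist (rdsPath f T a ω t) (xbar (T^[t] ω)) :=
          dist_rdsPath_succ_le hfix hLip (rdsPath_mem hinv ha t) (ih.trans (hγ t))
      _ ≤ L (T^[t] ω) * ((∏ i ∈ Finset.range t, L (T^[i] ω)) * γ) :=
          mul_le_mul_of_nonneg_left ih (hL _)
      _ = (∏ i ∈ Finset.range (t + 1), L (T^[i] ω)) * γ := by
          rw [Finset.prod_range_succ]; ring

end RdsPath

theorem stmt5_general {Ω X : Type*} [MetricSpace X]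
    (T : Ω → Ω) (f : X → Ω → X) (xbar : Ω → X)
    (Xset : Ω → Set X) (L δ : Ω → ℝ)
    (hLpos : ∀ ω, 0 < L ω)
    (hfix : ∀ ω, xbar (T ω) = f (xbar ω) ω)
    (hinv : ∀ ω, ∀ x ∈ Xset ω, f x ω ∈ Xset (T ω))
    (hLip : ∀ ω, ∀ x ∈ Xset ω, dist x (xbar ω) ≤ δ ω →
      dist (f x ω) (f (xbar ω) ω) ≤ L ω * dist x (xbar ω))
    (ω : Ω) (γ : ℝ) (hγ0 : γ ≤ δ ω)
    (hγt : ∀ t : ℕ, 1 ≤ t → (∏ i ∈ Finset.range t, L (T^[i] ω)) * γ ≤ δ (T^[t] ω))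
    (a : X) (ha : a ∈ Xset ω) (hd : dist a (xbar ω) ≤ γ) :
    ∀ t : ℕ, rdsPath f T a ω t ∈ Xset (T^[t] ω) ∧
      dist (rdsPath f T a ω t) (xbar (T^[t] ω)) ≤ δ (T^[t] ω) ∧
      dist (rdsPath f T a ω t) (xbar (T^[t] ω)) ≤ (∏ i ∈ Finset.range t, L (T^[i] ω)) * γ := by
  have hγ : ∀ t : ℕ, (∏ i ∈ Finset.range t, L (T^[i] ω)) * γ ≤ δ (T^[t] ω) := by
    rintro (_ | t)
    · simpa using hγ0
    · exact hγt _ t.succ_pos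
  intro t
  have hdist := dist_rdsPath_le_prod_mul (fun ω => (hLpos ω).le) hfix hinv hLip hγ ha hd t
  exact ⟨rdsPath_mem hinv ha t, hdist.trans (hγ t), hdist⟩

/-- Inductive trapping estimate: starting within `γ` of the fixed point, the path stays in the
random set, within the `δ_t`-neighborhoods, and satisfies `ρ(x_t^a, x̄_t) ≤ L_t⋯L_0 γ`. -/
theorem stmt5 {Ω X : Type*} [MetricSpace X]
    (T : Ω → Ω) (f : X → Ω → X) (xbar : Ω → X)
    (Xset : Ω → Set X) (L δ : Ω → ℝ)
    (hLpos : ∀ ω, 0 < L ω) (hδpos : ∀ ω, 0 < δ ω)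
    (hfix : ∀ ω, xbar (T ω) = f (xbar ω) ω)
    (hmem : ∀ ω, xbar ω ∈ Xset ω)
    (hinv : ∀ ω, ∀ x ∈ Xset ω, f x ω ∈ Xset (T ω))
    (hLip : ∀ ω, ∀ x ∈ Xset ω, dist x (xbar ω) ≤ δ ω →
      dist (f x ω) (f (xbar ω) ω) ≤ L ω * dist x (xbar ω))
    (ω : Ω) (γ : ℝ) (hγpos : 0 < γ) (hγ0 : γ ≤ δ ω)
    (hγt : ∀ t : ℕ, 1 ≤ t → (∏ i ∈ Finset.range t, L (T^[i] ω)) * γ ≤ δ (T^[t] ω))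
    (a : X) (ha : a ∈ Xset ω) (hd : dist a (xbar ω) ≤ γ) :
    ∀ t : ℕ, rdsPath f T a ω t ∈ Xset (T^[t] ω) ∧
      dist (rdsPath f T a ω t) (xbar (T^[t] ω)) ≤ δ (T^[t] ω) ∧
      dist (rdsPath f T a ω t) (xbar (T^[t] ω)) ≤ (∏ i ∈ Finset.range t, L (T^[i] ω)) * γ :=
  stmt5_general T f xbar Xset L δ hLpos hfix hinv hLip ω γ hγ0 hγt a ha hd
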